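/- arXiv:1501.04543 — 6 statements merged into one kernel-verified Lean document; each statement's English description precedes it below -/
import Mathlib

section
/- Let F be a finite set of polynomials, g, h, f polynomials in K[T_1,...,T_r] with g dividing h and h dividing f·g. Then V(F)\V(g) = (V(F ∪ {f}) \ V(g)) ∪ (V(F) \ V(h)). -/
/-- Case-by-case analysis: if `g ∣ h` and `h ∣ f·g`, then
`V(F) \ V(g) = (V(F ∪ {f}) \ V(g)) ∪ (V(F) \ V(h))`. -/
theorem case_by_case_analysis {K : Type*} [Field K] {r : ℕ}
    (F : Finset (MvPolynomial (Fin r) K)) (g h f : MvPolynomial (Fin r) K)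
    (hgh : g ∣ h) (hhfg : h ∣ f * g) :
    {x : Fin r → AlgebraicClosure K |
        (∀ p ∈ F, MvPolynomial.aeval x p = 0) ∧ MvPolynomial.aeval x g ≠ 0} =
      {x : Fin r → AlgebraicClosure K |
          ((∀ p ∈ F, MvPolynomial.aeval x p = 0) ∧ MvPolynomial.aeval x f = 0) ∧
            MvPolynomial.aeval x g ≠ 0} ∪
        {x : Fin r → AlgebraicClosure K |
          (∀ p ∈ F, MvPolynomial.aeval x p = 0) ∧ MvPolynomial.aeval x h ≠ 0} := by
  ext x
  simp only [Set.mem_setOf_eq, Set.mem_union]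
  constructor
  · rintro ⟨hF, hg⟩
    by_cases hh : MvPolynomial.aeval x h = 0
    · left
      refine ⟨⟨hF, ?_⟩, hg⟩
      obtain ⟨q, hq⟩ := hhfg
      have h0 : MvPolynomial.aeval x f * MvPolynomial.aeval x g = 0 := by
        have := congrArg (MvPolynomial.aeval x) hq
        simp only [map_mul] at this
        rw [this, hh, zero_mul]
      rcases mul_eq_zero.mp h0 with h1 | h1
      · exact h1
      · exact absurd h1 hg
    · right; exact ⟨hF, hh⟩
  · rintro (⟨⟨hF, _⟩, hg⟩ | ⟨hF, hh⟩)
    · exact ⟨hF, hg⟩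
    · refine ⟨hF, fun hg0 => hh ?_⟩
      obtain ⟨s, hs⟩ := hgh
      have := congrArg (MvPolynomial.aeval x) hs
      simp [hg0] at this
      exact this
end

section
/- Let L ⊆ R be a ring extension, I ⊆ R an ideal, and h ∈ R such that the class of h in R/I is integral over L with minimal polynomial p = b·X^j + f·X^{j+1} ∈ L[X], where b ∈ L is nonzero (i.e., j is maximal with X^j dividing p). Set J = (√I : h^∞) (the saturation of the radical of I by h). Then h' := −f(h)/b ∈ R satisfies h·h' − 1 ∈ J; in particular the class of h is invertible in R/J. -/
/-! Reading `p(h̄) = 0` in `R ⧸ I` gives `h ^ j * g ∈ I` for `g = b + h * f(h)`, so `h * g` is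
nilpotent modulo `I`. Since `h * (h * h' - 1) = -b⁻¹ * (h * g)`, the element `h * h' - 1` lies in
`√I : h`. -/

open Polynomial

theorem Ideal.mul_mem_radical_of_pow_mul_mem {R : Type*} [CommSemiring R] {I : Ideal R}
    {x y : R} (j : ℕ) (hxy : x ^ j * y ∈ I) : x * y ∈ I.radical :=
  ⟨j + 1, by
    rw [show (x * y) ^ (j + 1) = x ^ j * y * (x * y ^ j) by ring]
    exact I.mul_mem_right _ hxy⟩

theorem Polynomial.aeval_minpoly_quotient_mk_mem {L R : Type*} [CommRing L] [CommRing R]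
    [Algebra L R] (I : Ideal R) (x : R) :
    aeval x (minpoly L (Ideal.Quotient.mk I x)) ∈ I := by
  rw [← Ideal.Quotient.eq_zero_iff_mem, ← Ideal.Quotient.mkₐ_eq_mk L, ← aeval_algHom_apply]
  exact minpoly.aeval L _

theorem Polynomial.aeval_C_mul_X_pow_add_mul_X_pow_succ {L R : Type*} [CommSemiring L]
    [CommSemiring R] [Algebra L R] (x : R) (b : L) (j : ℕ) (f : L[X]) :
    aeval x (C b * X ^ j + f * X ^ (j + 1)) = x ^ j * (algebraMap L R b + x * aeval x f) := by
  simp only [map_add, map_mul, aeval_C, map_pow, aeval_X]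
  ring

theorem inverse_mod_saturated_radical_general {L R : Type*} [Field L] [CommRing R] [Algebra L R]
    (I : Ideal R) (h : R) (b : L) (j : ℕ) (f : Polynomial L)
    (hb : b ≠ 0)
    (hmin : minpoly L (Ideal.Quotient.mk I h) =
      Polynomial.C b * Polynomial.X ^ j + f * Polynomial.X ^ (j + 1)) :
    h * (-(algebraMap L R b⁻¹ * Polynomial.aeval h f)) - 1 ∈
      (I.radical).colon (Ideal.span {h}) := by
  have hg : h * (algebraMap L R b + h * aeval h f) ∈ I.radical := by
    refine Ideal.mul_mem_radical_of_pow_mul_mem j ?_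
    rw [← aeval_C_mul_X_pow_add_mul_X_pow_succ, ← hmin]
    exact aeval_minpoly_quotient_mk_mem I h
  have hb' : algebraMap L R b⁻¹ * algebraMap L R b = 1 := by
    rw [← map_mul, inv_mul_cancel₀ hb, map_one]
  rw [Ideal.mem_colon_span_singleton]
  convert I.radical.mul_mem_left (-algebraMap L R b⁻¹) hg using 1
  linear_combination h * hb'

/-- If the class of `h` in `R/I` is integral over `L` with minimal polynomial
`p = C b * X^j + f * X^(j+1)` (`b ≠ 0`, i.e. `j` maximal with `X^j ∣ p`), then
`h' := -f(h)/b` satisfies `h·h' - 1 ∈ √I : h`. -/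
theorem inverse_mod_saturated_radical {L R : Type*} [Field L] [CommRing R] [Algebra L R]
    (I : Ideal R) (h : R) (b : L) (j : ℕ) (f : Polynomial L)
    (hint : IsIntegral L (Ideal.Quotient.mk I h))
    (hb : b ≠ 0)
    (hmin : minpoly L (Ideal.Quotient.mk I h) =
      Polynomial.C b * Polynomial.X ^ j + f * Polynomial.X ^ (j + 1)) :
    h * (-(algebraMap L R b⁻¹ * Polynomial.aeval h f)) - 1 ∈
      (I.radical).colon (Ideal.span {h}) :=
  inverse_mod_saturated_radical_general I h b j f hb hmin
end

section
/- Let L be a field, F a finite set of polynomials in L[T_1,...,T_r] generating an ideal such that R := L[T_1,...,T_r]/⟨F⟩ is integral over L, and let g ∈ L[T_1,...,T_r]. If p ∈ L[X] satisfies p(g) ∈ √⟨F⟩, then the minimal polynomial p_g of the class ḡ ∈ R divides p^k for some k ≥ 0. -/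
/-- If `R = L[T_1,…,T_r]/⟨F⟩` is integral over `L` and `p(g) ∈ √⟨F⟩`, then the minimal
polynomial of the class of `g` in `R` divides `p^k` for some `k`. -/
theorem minpoly_dvd_pow_of_radical_annihilator {L : Type*} [Field L] {r : ℕ}
    (F : Finset (MvPolynomial (Fin r) L)) (g : MvPolynomial (Fin r) L) (p : Polynomial L)
    (hint : Algebra.IsIntegral L
      (MvPolynomial (Fin r) L ⧸ Ideal.span (F : Set (MvPolynomial (Fin r) L))))
    (hp : Polynomial.aeval g p ∈
      (Ideal.span (F : Set (MvPolynomial (Fin r) L))).radical) :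
    ∃ k : ℕ, minpoly L
        (Ideal.Quotient.mk (Ideal.span (F : Set (MvPolynomial (Fin r) L))) g) ∣ p ^ k := by
  obtain ⟨n, hn⟩ := hp
  refine ⟨n, minpoly.dvd L _ ?_⟩
  have : Polynomial.aeval
      (Ideal.Quotient.mk (Ideal.span (F : Set (MvPolynomial (Fin r) L))) g) p
      = Ideal.Quotient.mk _ (Polynomial.aeval g p) := by
    rw [← Ideal.Quotient.mkₐ_eq_mk L, Polynomial.aeval_algHom_apply]
  rw [map_pow, this, ← map_pow, Ideal.Quotient.eq_zero_iff_mem.2 hn]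
end

section
/- Let L be a field with algebraic closure L̄, and let F ⊆ L[T_1,...,T_r] be a finite set of polynomials such that R := L[T_1,...,T_r]/⟨F⟩ is integral over L. Let g ∈ L[T_1,...,T_r] and let p_g ∈ L[X] be the minimal polynomial of ḡ ∈ R. Then there exists x ∈ L̄^r with f(x)=0 for all f ∈ F and g(x) ≠ 0 if and only if p_g is not of the form X^n. -/
/-!
Over a field, a monic divisor of `X ^ m` is itself a power of `X`, so the minimal polynomial of
`ḡ` is a power of `X` exactly when `ḡ` is nilpotent. Points of `V(F)` over `L̄` are the same as
`L`-algebra maps `R → L̄`, and such maps kill nilpotents. Conversely, a non-nilpotent `ḡ` avoids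
some prime `p`; the domain `R ⧸ p` is integral, hence algebraic, over `L`, so it embeds into `L̄`,
and the image of `ḡ` is nonzero because nonzero elements of `R ⧸ p` are units.
-/

open MvPolynomial

theorem exists_minpoly_eq_X_pow_iff_isNilpotent {K A : Type*} [Field K] [Ring A] [Algebra K A]
    {a : A} (ha : IsIntegral K a) : (∃ n : ℕ, minpoly K a = Polynomial.X ^ n) ↔ IsNilpotent a := by
  constructor
  · rintro ⟨n, hn⟩
    refine ⟨n, ?_⟩
    simpa [hn] using minpoly.aeval K a
  · rintro ⟨n, hn⟩
    have hdvd : minpoly K a ∣ Polynomial.X ^ n := minpoly.dvd K a (by simp [hn])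
    obtain ⟨i, -, hassoc⟩ := (dvd_prime_pow Polynomial.prime_X n).mp hdvd
    exact ⟨i, Polynomial.eq_of_monic_of_associated (minpoly.monic ha)
      (Polynomial.monic_X_pow i) hassoc⟩

theorem exists_algHom_ne_zero_iff_not_isNilpotent {K A Ω : Type*} [Field K] [CommRing A]
    [Algebra K A] [Algebra.IsIntegral K A] [Field Ω] [IsAlgClosed Ω] [Algebra K Ω] (a : A) :
    (∃ φ : A →ₐ[K] Ω, φ a ≠ 0) ↔ ¬IsNilpotent a := by
  constructor
  · rintro ⟨φ, hφa⟩ ha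
    exact hφa ((ha.map φ).eq_zero)
  · intro ha
    obtain ⟨p, hp, hap⟩ : ∃ p : Ideal A, p.IsPrime ∧ a ∉ p := by
      simpa [nilpotent_iff_mem_prime] using ha
    have ha_ne : Ideal.Quotient.mk p a ≠ 0 := mt Ideal.Quotient.eq_zero_iff_mem.mp hap
    let ψ : A ⧸ p →ₐ[K] Ω := IsAlgClosed.lift
    refine ⟨ψ.comp (Ideal.Quotient.mkₐ K p), ?_⟩
    exact ((Algebra.IsIntegral.isIntegral (R := K) _).isUnit ha_ne |>.map ψ).ne_zero

theorem exists_point_aeval_ne_zero_iff_exists_algHom {σ R S : Type*} [CommRing R] [CommRing S]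
    [Algebra R S] (F : Set (MvPolynomial σ R)) (g : MvPolynomial σ R) :
    (∃ x : σ → S, (∀ f ∈ F, aeval x f = 0) ∧ aeval x g ≠ 0) ↔
      ∃ φ : MvPolynomial σ R ⧸ Ideal.span F →ₐ[R] S, φ (Ideal.Quotient.mk _ g) ≠ 0 := by
  constructor
  · rintro ⟨x, hxF, hxg⟩
    have hker : Ideal.span F ≤ RingHom.ker (aeval (R := R) x) :=
      Ideal.span_le.mpr fun f hf => hxF f hf
    exact ⟨Ideal.Quotient.liftₐ _ (aeval x) hker, hxg⟩
  · rintro ⟨φ, hφg⟩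
    let χ := φ.comp (Ideal.Quotient.mkₐ R (Ideal.span F))
    have hχ : aeval (χ ∘ X) = χ := (aeval_unique χ).symm
    refine ⟨χ ∘ X, fun f hf => ?_, ?_⟩
    · rw [hχ]
      simp [χ, Ideal.Quotient.eq_zero_iff_mem.mpr (Ideal.subset_span hf)]
    · rwa [hχ]

/-- Solvability criterion: if `R = L[T_1,…,T_r]/⟨F⟩` is integral over `L`, then there is a
point `x` over the algebraic closure with `f(x) = 0` for all `f ∈ F` and `g(x) ≠ 0` if and
only if the minimal polynomial of the class of `g` in `R` is not of the form `X^n`. -/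
theorem solvable_iff_minpoly_not_monomial {L : Type*} [Field L] {r : ℕ}
    (F : Finset (MvPolynomial (Fin r) L)) (g : MvPolynomial (Fin r) L)
    (hint : Algebra.IsIntegral L
      (MvPolynomial (Fin r) L ⧸ Ideal.span (F : Set (MvPolynomial (Fin r) L)))) :
    (∃ x : Fin r → AlgebraicClosure L,
        (∀ f ∈ F, MvPolynomial.aeval x f = 0) ∧ MvPolynomial.aeval x g ≠ 0) ↔
      ¬ ∃ n : ℕ, minpoly L
          (Ideal.Quotient.mk (Ideal.span (F : Set (MvPolynomial (Fin r) L))) g) =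
            Polynomial.X ^ n := by
  rw [exists_minpoly_eq_X_pow_iff_isNilpotent (hint.isIntegral _),
    ← exists_algHom_ne_zero_iff_not_isNilpotent (K := L) (Ω := AlgebraicClosure L)]
  exact exists_point_aeval_ne_zero_iff_exists_algHom (F : Set (MvPolynomial (Fin r) L)) g
end

section
/- Let K be a field, F ⊆ K[T_1,...,T_r] finite, g ∈ K[T_1,...,T_r], and let f = h·T_n^m + c with h ∈ K[T_{n+1},...,T_r], c having T_n-degree less than m. Suppose h' ∈ K[T_{n+1},...,T_r] satisfies h·h' − 1 ∈ √⟨F⟩ : g. Then √(⟨F⟩ + ⟨f⟩) : g = √(⟨F⟩ + ⟨T_n^m + h'·c⟩) : g, and consequently V(F ∪ {f}) \ V(g) = V(F ∪ {T_n^m + h'c}) \ V(g). -/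
/-!
Put `f = h·T_n^m + c`, `f' = T_n^m + h'·c` and `J = √⟨F⟩ : g`. Both `f - h·f' = -(hh' - 1)·c` and
`f' - h'·f = -(hh' - 1)·T_n^m` lie in `J`, so `f ∈ √(⟨F⟩ + ⟨f'⟩) : g` and vice versa; and an
ideal `A ≤ √B : g` has `√A : g ≤ √B : g`. Pointwise, `J` vanishes on `V(F) \ V(g)`, so there `f`
and `f'` are multiples of each other and vanish together.
-/

namespace Ideal

variable {R : Type*} [CommRing R] {I A B : Ideal R} {g f f' a b : R}

theorem radical_colon_le_radical_colon_of_le (hAB : A ≤ B.radical.colon (span {g})) :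
    A.radical.colon (span {g}) ≤ B.radical.colon (span {g}) := by
  intro x hx
  obtain ⟨k, hk⟩ := mem_colon_span_singleton.mp hx
  have hkg : (x * g) ^ k * g ∈ B.radical := mem_colon_span_singleton.mp (hAB hk)
  refine mem_colon_span_singleton.mpr (mem_radical_of_pow_mem (m := k + 1) ?_)
  rw [pow_succ, mul_left_comm]
  exact B.radical.mul_mem_left x hkg

theorem sup_span_singleton_le_radical_colon
    (hf : f - a * f' ∈ I.radical.colon (span {g})) :
    I ⊔ span {f} ≤ (I ⊔ span {f'}).radical.colon (span {g}) := by
  set J := (I ⊔ span {f'}).radical.colon (span {g})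
  have hIf' : I ⊔ span {f'} ≤ J := le_radical.trans le_colon
  have hJ : I.radical.colon (span {g}) ≤ J :=
    Submodule.colon_mono (radical_mono le_sup_left) le_rfl
  refine sup_le (le_sup_left.trans hIf') (span_singleton_le_iff_mem _ |>.mpr ?_)
  have hf' : a * f' ∈ J := J.mul_mem_left a (hIf' (mem_sup_right (mem_span_singleton_self f')))
  simpa using J.add_mem (hJ hf) hf'

theorem radical_sup_span_singleton_colon_eq
    (hf : f - a * f' ∈ I.radical.colon (span {g}))
    (hf' : f' - b * f ∈ I.radical.colon (span {g})) :
    (I ⊔ span {f}).radical.colon (span {g}) = (I ⊔ span {f'}).radical.colon (span {g}) :=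
  le_antisymm (radical_colon_le_radical_colon_of_le (sup_span_singleton_le_radical_colon hf))
    (radical_colon_le_radical_colon_of_le (sup_span_singleton_le_radical_colon hf'))

end Ideal

section RingHom

variable {R S F : Type*} [CommRing R] [CommRing S] [IsDomain S] [FunLike F R S]
  [RingHomClass F R S] {φ : F} {I : Ideal R} {g q f f' a b : R}

theorem RingHom.map_eq_zero_of_mem_radical_colon (hI : I ≤ RingHom.ker φ) (hg : φ g ≠ 0)
    (hq : q ∈ I.radical.colon (Ideal.span {g})) : φ q = 0 := by
  have hqg : q * g ∈ RingHom.ker φ :=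
    (RingHom.ker_isPrime φ).radical_le_iff.mpr hI (Ideal.mem_colon_span_singleton.mp hq)
  rw [RingHom.mem_ker, map_mul] at hqg
  exact (mul_eq_zero.mp hqg).resolve_right hg

theorem RingHom.map_eq_zero_iff_of_sub_mul_mem_radical_colon (hI : I ≤ RingHom.ker φ)
    (hg : φ g ≠ 0) (hf : f - a * f' ∈ I.radical.colon (Ideal.span {g}))
    (hf' : f' - b * f ∈ I.radical.colon (Ideal.span {g})) : φ f = 0 ↔ φ f' = 0 := by
  have hf₀ := RingHom.map_eq_zero_of_mem_radical_colon hI hg hf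
  have hf'₀ := RingHom.map_eq_zero_of_mem_radical_colon hI hg hf'
  rw [map_sub, map_mul, sub_eq_zero] at hf₀ hf'₀
  exact ⟨fun h0 => by rw [hf'₀, h0, mul_zero], fun h0 => by rw [hf₀, h0, mul_zero]⟩

end RingHom

open MvPolynomial in
theorem make_monic_preserves_saturated_radical_general {K : Type*} [Field K] {r : ℕ}
    (F : Finset (MvPolynomial (Fin r) K)) (g : MvPolynomial (Fin r) K)
    (n : Fin r) (m : ℕ) (h c h' : MvPolynomial (Fin r) K)
    (hinv : h * h' - 1 ∈
      ((Ideal.span (F : Set (MvPolynomial (Fin r) K))).radical).colon (Ideal.span {g})) :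
    ((Ideal.span (F : Set (MvPolynomial (Fin r) K)) +
          Ideal.span {h * MvPolynomial.X n ^ m + c}).radical).colon (Ideal.span {g}) =
      ((Ideal.span (F : Set (MvPolynomial (Fin r) K)) +
          Ideal.span {MvPolynomial.X n ^ m + h' * c}).radical).colon (Ideal.span {g}) ∧
    {x : Fin r → AlgebraicClosure K |
        ((∀ p ∈ F, MvPolynomial.aeval x p = 0) ∧
            MvPolynomial.aeval x (h * MvPolynomial.X n ^ m + c) = 0) ∧
          MvPolynomial.aeval x g ≠ 0} =
      {x : Fin r → AlgebraicClosure K |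
        ((∀ p ∈ F, MvPolynomial.aeval x p = 0) ∧
            MvPolynomial.aeval x (MvPolynomial.X n ^ m + h' * c) = 0) ∧
          MvPolynomial.aeval x g ≠ 0} := by
  set J := (Ideal.span (F : Set (MvPolynomial (Fin r) K))).radical.colon (Ideal.span {g})
  have hf : h * X n ^ m + c - h * (X n ^ m + h' * c) ∈ J := by
    convert J.mul_mem_left (-c) hinv using 1; ring
  have hf' : X n ^ m + h' * c - h' * (h * X n ^ m + c) ∈ J := by
    convert J.mul_mem_left (-X n ^ m) hinv using 1; ring
  refine ⟨Ideal.radical_sup_span_singleton_colon_eq hf hf', ?_⟩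
  ext x
  refine and_congr_left fun hg => and_congr_right fun hF => ?_
  have hker : Ideal.span (F : Set (MvPolynomial (Fin r) K)) ≤ RingHom.ker (aeval x) :=
    Ideal.span_le.mpr hF
  exact RingHom.map_eq_zero_iff_of_sub_mul_mem_radical_colon hker hg hf hf'

/-- Making a triangular system monic: if `f = h·T_n^m + c` with `h ∈ K[T_{n+1},…,T_r]`,
`deg_{T_n} c < m`, and `h·h' - 1 ∈ √⟨F⟩ : g` for some `h' ∈ K[T_{n+1},…,T_r]`, then
`√(⟨F⟩+⟨f⟩) : g = √(⟨F⟩+⟨T_n^m + h'·c⟩) : g` and consequently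
`V(F ∪ {f}) \ V(g) = V(F ∪ {T_n^m + h'c}) \ V(g)`. -/
theorem make_monic_preserves_saturated_radical {K : Type*} [Field K] {r : ℕ}
    (F : Finset (MvPolynomial (Fin r) K)) (g : MvPolynomial (Fin r) K)
    (n : Fin r) (m : ℕ) (h c h' : MvPolynomial (Fin r) K)
    (hh : h ∈ MvPolynomial.supported K {j : Fin r | n < j})
    (hcdeg : MvPolynomial.degreeOf n c < m)
    (hh' : h' ∈ MvPolynomial.supported K {j : Fin r | n < j})
    (hinv : h * h' - 1 ∈
      ((Ideal.span (F : Set (MvPolynomial (Fin r) K))).radical).colon (Ideal.span {g})) :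
    ((Ideal.span (F : Set (MvPolynomial (Fin r) K)) +
          Ideal.span {h * MvPolynomial.X n ^ m + c}).radical).colon (Ideal.span {g}) =
      ((Ideal.span (F : Set (MvPolynomial (Fin r) K)) +
          Ideal.span {MvPolynomial.X n ^ m + h' * c}).radical).colon (Ideal.span {g}) ∧
    {x : Fin r → AlgebraicClosure K |
        ((∀ p ∈ F, MvPolynomial.aeval x p = 0) ∧
            MvPolynomial.aeval x (h * MvPolynomial.X n ^ m + c) = 0) ∧
          MvPolynomial.aeval x g ≠ 0} =
      {x : Fin r → AlgebraicClosure K |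
        ((∀ p ∈ F, MvPolynomial.aeval x p = 0) ∧
            MvPolynomial.aeval x (MvPolynomial.X n ^ m + h' * c) = 0) ∧
          MvPolynomial.aeval x g ≠ 0} :=
  make_monic_preserves_saturated_radical_general F g n m h c h' hinv
end

section
/- Let K be a field and L = K(T_2,...,T_r). Let f ∈ K[T_1,...,T_r] be a polynomial with positive T_1-degree whose leading coefficient a := LC_{T_1}(f) satisfies a(x) ≠ 0 for a given point x = (x_1,...,x_r) ∈ K̄^r with f(x) = 0. Writing f = c·∏_{j=1}^n (T_1 − t_j) over the algebraic closure L̄ of L (possible since f has positive degree in T_1 over L), and letting ε be a place of L̄ over K̄ extending evaluation at (x_2,...,x_r) with all t_j-relevant elements considered, then there exists j such that t_j lies in the valuation ring of ε and ε(t_j) = x_1. -/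
/-!
Evaluate `f` at a lift `y = φ x₁` of `x₁`. The value `c · ∏ (y - t_j)` lies in the valuation
ring and is sent by `ε` to `f(x) = 0`. Since `ε(c) = a(x') ≠ 0`, `c` is a unit of the valuation
ring, so `ε(∏ (y - t_j)) = 0`. A product in the valuation ring whose factors all escape the
kernel of `ε` has inverse in the ring, hence is a unit; so some factor `y - t_j` lies in the
kernel, that is `ε(t_j) = ε(y) = x₁`.
-/

open Polynomial

section Place

variable {L k : Type*} [Field L] [Semiring k] {A : Subring L} {ε : A →+* k}

lemma inv_mem_of_map_ne_zero (hplace : ∀ z, z ∉ A → ∃ hz : z⁻¹ ∈ A, ε ⟨z⁻¹, hz⟩ = 0)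
    {z : L} (hz : z ∈ A) (hεz : ε ⟨z, hz⟩ ≠ 0) : z⁻¹ ∈ A := by
  by_contra hz'
  obtain ⟨_, h⟩ := hplace _ hz'
  simp only [inv_inv] at h
  exact hεz h

lemma map_ne_zero_of_inv_mem [Nontrivial k] {z : L} (hz : z ∈ A) (hz' : z⁻¹ ∈ A) (hz0 : z ≠ 0) :
    ε ⟨z, hz⟩ ≠ 0 := by
  have hunit : (⟨z, hz⟩ : A) * ⟨z⁻¹, hz'⟩ = 1 := Subtype.ext (mul_inv_cancel₀ hz0)
  exact (IsUnit.of_mul_eq_one _ hunit).map ε |>.ne_zero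

lemma exists_mem_map_eq_zero_of_prod [Nontrivial k]
    (hplace : ∀ z, z ∉ A → ∃ hz : z⁻¹ ∈ A, ε ⟨z⁻¹, hz⟩ = 0)
    {ι : Type*} (s : Finset ι) (z : ι → L) (hP : ∏ i ∈ s, z i ∈ A)
    (hεP : ε ⟨∏ i ∈ s, z i, hP⟩ = 0) : ∃ i ∈ s, ∃ hi : z i ∈ A, ε ⟨z i, hi⟩ = 0 := by
  by_contra! h
  have hz0 : ∀ i ∈ s, z i ≠ 0 := by
    intro i hi hzi
    exact h i hi (hzi ▸ A.zero_mem) (by simp only [hzi]; exact map_zero ε)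
  have hinv : ∀ i ∈ s, (z i)⁻¹ ∈ A := fun i hi ↦ by
    by_cases hzi : z i ∈ A
    · exact inv_mem_of_map_ne_zero hplace hzi (h i hi hzi)
    · exact (hplace _ hzi).1
  have hP' : (∏ i ∈ s, z i)⁻¹ ∈ A := by
    rw [← Finset.prod_inv_distrib]
    exact prod_mem hinv
  exact map_ne_zero_of_inv_mem hP hP' (Finset.prod_ne_zero_iff.mpr hz0) hεP

lemma exists_mem_map_eq_zero_of_mul (hplace : ∀ z, z ∉ A → ∃ hz : z⁻¹ ∈ A, ε ⟨z⁻¹, hz⟩ = 0)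
    {a b : L} (ha : a ∈ A) (hεa : ε ⟨a, ha⟩ ≠ 0) (hab : a * b ∈ A) (hεab : ε ⟨a * b, hab⟩ = 0) :
    ∃ hb : b ∈ A, ε ⟨b, hb⟩ = 0 := by
  have ha0 : a ≠ 0 := by
    rintro rfl
    exact hεa (map_zero ε)
  have hb : b = a⁻¹ * (a * b) := (inv_mul_cancel_left₀ ha0 b).symm
  have ha' := inv_mem_of_map_ne_zero hplace ha hεa
  refine ⟨hb ▸ A.mul_mem ha' hab, ?_⟩
  rw [show (⟨b, _⟩ : A) = ⟨a⁻¹, ha'⟩ * ⟨a * b, hab⟩ from Subtype.ext hb, map_mul, hεab, mul_zero]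

lemma exists_mem_map_eval_map {R : Type*} [CommSemiring R] (ψ : R →+* L) (χ : R →+* k)
    (hψ : ∀ p, ∃ h : ψ p ∈ A, ε ⟨ψ p, h⟩ = χ p) (f : R[X]) {y : L} (hy : y ∈ A) :
    ∃ h : (f.map ψ).eval y ∈ A, ε ⟨_, h⟩ = (f.map χ).eval (ε ⟨y, hy⟩) := by
  let ρ : R →+* A := ψ.codRestrict A fun p ↦ (hψ p).1
  have hρ : ε.comp ρ = χ := RingHom.ext fun p ↦ (hψ p).2
  have hval : (f.map ψ).eval y = f.eval₂ ρ ⟨y, hy⟩ := by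
    rw [← Subring.coe_subtype, hom_eval₂, eval_map]
    rfl
  have hmem : (f.map ψ).eval y ∈ A := hval ▸ (f.eval₂ ρ ⟨y, hy⟩).2
  refine ⟨hmem, ?_⟩
  rw [show (⟨_, hmem⟩ : A) = f.eval₂ ρ ⟨y, hy⟩ from Subtype.ext hval, hom_eval₂, hρ, eval_map]

end Place

lemma exists_mem_map_eq_of_sub {L k : Type*} [Field L] [Ring k] {A : Subring L} {ε : A →+* k}
    {y t : L} (hy : y ∈ A) (hyt : y - t ∈ A) (hεyt : ε ⟨y - t, hyt⟩ = 0) :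
    ∃ ht : t ∈ A, ε ⟨t, ht⟩ = ε ⟨y, hy⟩ := by
  have ht : t = y - (y - t) := (sub_sub_cancel _ _).symm
  refine ⟨ht ▸ A.sub_mem hy hyt, ?_⟩
  rw [show (⟨t, _⟩ : A) = ⟨y, hy⟩ - ⟨y - t, hyt⟩ from Subtype.ext ht, map_sub, hεyt, sub_zero]

lemma leadingCoeff_eq_of_map_eq_C_mul_prod {R S : Type*} [CommRing R] [CommRing S]
    {ψ : R →+* S} (hψ : Function.Injective ψ) {f : R[X]} {ι : Type*} {s : Finset ι}
    {c : S} {t : ι → S} (h : f.map ψ = C c * ∏ i ∈ s, (X - C (t i))) :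
    ψ f.leadingCoeff = c := by
  rw [← leadingCoeff_map_of_injective hψ, h, (monic_prod_X_sub_C t s).leadingCoeff_C_mul]

theorem root_specializes_along_place_general {K : Type*} [Field K] {m : ℕ}
    (f : Polynomial (MvPolynomial (Fin m) K))
    (x₁ : AlgebraicClosure K) (x' : Fin m → AlgebraicClosure K)
    (ha : MvPolynomial.aeval x' f.leadingCoeff ≠ 0)
    (hfx : Polynomial.eval x₁
      (f.map ((MvPolynomial.aeval x' :
        MvPolynomial (Fin m) K →ₐ[K] AlgebraicClosure K) : MvPolynomial (Fin m) K →+*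
          AlgebraicClosure K)) = 0)
    {n : ℕ} (t : Fin n → AlgebraicClosure (FractionRing (MvPolynomial (Fin m) K)))
    (c : AlgebraicClosure (FractionRing (MvPolynomial (Fin m) K)))
    (hfactor : f.map (((algebraMap (FractionRing (MvPolynomial (Fin m) K))
          (AlgebraicClosure (FractionRing (MvPolynomial (Fin m) K)))).comp
        (algebraMap (MvPolynomial (Fin m) K) (FractionRing (MvPolynomial (Fin m) K))))) =
      Polynomial.C c * ∏ j, (Polynomial.X - Polynomial.C (t j)))
    (φ : AlgebraicClosure K →+* AlgebraicClosure (FractionRing (MvPolynomial (Fin m) K)))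
    (A : Subring (AlgebraicClosure (FractionRing (MvPolynomial (Fin m) K))))
    (ε : A →+* AlgebraicClosure K)
    (hplace : ∀ z, z ∉ A → ∃ hz : z⁻¹ ∈ A, ε ⟨z⁻¹, hz⟩ = 0)
    (hφ : ∀ a : AlgebraicClosure K, ∃ h : φ a ∈ A, ε ⟨φ a, h⟩ = a)
    (heval : ∀ p : MvPolynomial (Fin m) K,
      ∃ h : ((algebraMap (FractionRing (MvPolynomial (Fin m) K))
          (AlgebraicClosure (FractionRing (MvPolynomial (Fin m) K)))).comp
        (algebraMap (MvPolynomial (Fin m) K) (FractionRing (MvPolynomial (Fin m) K)))) p ∈ A,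
        ε ⟨_, h⟩ = MvPolynomial.aeval x' p) :
    ∃ j, ∃ hj : t j ∈ A, ε ⟨t j, hj⟩ = x₁ := by
  obtain ⟨hy, hεy⟩ := hφ x₁
  obtain ⟨hfy, hεfy⟩ := exists_mem_map_eval_map _ (MvPolynomial.aeval x').toRingHom heval f hy
  rw [hεy, AlgHom.toRingHom_eq_coe, hfx] at hεfy
  simp only [hfactor, eval_mul, eval_C, eval_prod, eval_sub, eval_X] at hfy hεfy
  obtain rfl := leadingCoeff_eq_of_map_eq_C_mul_prod (h := hfactor)
    ((algebraMap _ _).injective.comp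
      (IsFractionRing.injective (MvPolynomial (Fin m) K) (FractionRing (MvPolynomial (Fin m) K))))
  obtain ⟨hc, hεc⟩ := heval f.leadingCoeff
  obtain ⟨hP, hεP⟩ := exists_mem_map_eq_zero_of_mul hplace hc (hεc ▸ ha) hfy hεfy
  obtain ⟨j, -, hj, hεj⟩ := exists_mem_map_eq_zero_of_prod hplace _ _ hP hεP
  exact ⟨j, hεy ▸ exists_mem_map_eq_of_sub hy hj hεj⟩

/-- Let `f ∈ K[T_2,…,T_r][T_1]` have positive `T_1`-degree, and let `x = (x₁, x')` be a point
over `K̄` with `f(x) = 0` and `LC_{T_1}(f)(x') ≠ 0`.  Write `f = c·∏(T_1 - t_j)` over the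
algebraic closure `L̄` of `L = K(T_2,…,T_r)` and let `ε` be a place of `L̄` over `K̄`
extending evaluation at `x'`.  Then some root `t_j` lies in the valuation ring of `ε` and
`ε(t_j) = x₁`. -/
theorem root_specializes_along_place {K : Type*} [Field K] {m : ℕ}
    (f : Polynomial (MvPolynomial (Fin m) K))
    (hdeg : 0 < f.natDegree)
    (x₁ : AlgebraicClosure K) (x' : Fin m → AlgebraicClosure K)
    (ha : MvPolynomial.aeval x' f.leadingCoeff ≠ 0)
    (hfx : Polynomial.eval x₁
      (f.map ((MvPolynomial.aeval x' :
        MvPolynomial (Fin m) K →ₐ[K] AlgebraicClosure K) : MvPolynomial (Fin m) K →+*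
          AlgebraicClosure K)) = 0)
    {n : ℕ} (t : Fin n → AlgebraicClosure (FractionRing (MvPolynomial (Fin m) K)))
    (c : AlgebraicClosure (FractionRing (MvPolynomial (Fin m) K))) (hc : c ≠ 0)
    (hfactor : f.map (((algebraMap (FractionRing (MvPolynomial (Fin m) K))
          (AlgebraicClosure (FractionRing (MvPolynomial (Fin m) K)))).comp
        (algebraMap (MvPolynomial (Fin m) K) (FractionRing (MvPolynomial (Fin m) K))))) =
      Polynomial.C c * ∏ j, (Polynomial.X - Polynomial.C (t j)))
    (φ : AlgebraicClosure K →+* AlgebraicClosure (FractionRing (MvPolynomial (Fin m) K)))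
    (A : Subring (AlgebraicClosure (FractionRing (MvPolynomial (Fin m) K))))
    (ε : A →+* AlgebraicClosure K)
    (hplace : ∀ z, z ∉ A → ∃ hz : z⁻¹ ∈ A, ε ⟨z⁻¹, hz⟩ = 0)
    (hφ : ∀ a : AlgebraicClosure K, ∃ h : φ a ∈ A, ε ⟨φ a, h⟩ = a)
    (heval : ∀ p : MvPolynomial (Fin m) K,
      ∃ h : ((algebraMap (FractionRing (MvPolynomial (Fin m) K))
          (AlgebraicClosure (FractionRing (MvPolynomial (Fin m) K)))).comp
        (algebraMap (MvPolynomial (Fin m) K) (FractionRing (MvPolynomial (Fin m) K)))) p ∈ A,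
        ε ⟨_, h⟩ = MvPolynomial.aeval x' p) :
    ∃ j, ∃ hj : t j ∈ A, ε ⟨t j, hj⟩ = x₁ :=
  root_specializes_along_place_general f x₁ x' ha hfx t c hfactor φ A ε hplace hφ heval
end
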